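/- Let p ≥ 5 and let u : ℝ³ × [0,1) → ℝ be twice continuously differentiable and satisfy ∂_t² u = Δu − |u|^{p−1}u on ℝ³ × (0,1) (Δ the Laplacian in the space variable). Suppose that for every t ∈ [0,1), u(·,t) and ∂_t u(·,t) vanish outside the ball {|x| ≤ 1−t}, and that there exist q > 2, r > p+1 and A > 0 such that for all t ∈ [0,1): ‖∇u(·,t)‖_{L^q(ℝ³)} + ‖∂_t u(·,t)‖_{L^q(ℝ³)} + ‖u(·,t)‖_{L^r(ℝ³)} ≤ A. Then u ≡ 0. -/

import Mathlib

open MeasureTheory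

/-- The `i`-th partial derivative in the space variable. -/
noncomputable def pder (v : (Fin 3 → ℝ) → ℝ) (i : Fin 3) (x : Fin 3 → ℝ) : ℝ :=
  deriv (fun s => v (Function.update x i s)) (x i)

/-- The Laplacian in the space variable: the sum of the three second partial
derivatives. -/
noncomputable def lap (v : (Fin 3 → ℝ) → ℝ) (x : Fin 3 → ℝ) : ℝ :=
  ∑ i, deriv (fun s => deriv (fun s' => v (Function.update x i s')) s) (x i)

/-!
The energy `E(t) = ∫ |∇ₓu|²/2 + (∂ₜu)²/2 + |u|^(p+1)/(p+1) dx` is conserved on `(0, 1)`: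
differentiating under the integral sign and using the equation and the symmetry of second
derivatives, `∂ₜ` of the energy density is the divergence of `∂ₜu ∇ₓu`, whose integral vanishes
because `u(·, t)` has compact support. On the other hand `u(·, t)` is supported in a ball of volume
`O((1 - t)³)`, so Hölder's inequality turns the uniform `L^q` bounds on `∇ₓu`, `∂ₜu` (`q > 2`) and
the `L^r` bound on `u` (`r > p + 1`) into `E(t) → 0` as `t → 1`. Hence `E = 0` on `(0, 1)`, so `u`
vanishes there, and at `t = 0` by continuity.
-/

open Set Filter Topology
open scoped ENNReal

theorem sq_lt_sum_sq_of_notMem_closedBall {n : ℕ} {x : Fin n → ℝ} {ρ : ℝ} (hρ : 0 ≤ ρ)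
    (hx : x ∉ Metric.closedBall 0 ρ) : ρ ^ 2 < ∑ i, x i ^ 2 := by
  rw [Metric.mem_closedBall, dist_zero_right, not_le] at hx
  have hnorm : ‖x‖ ≤ √(∑ i, x i ^ 2) :=
    (pi_norm_le_iff_of_nonneg (Real.sqrt_nonneg _)).2 fun i => Real.abs_le_sqrt
      (Finset.single_le_sum (f := fun i => x i ^ 2) (fun i _ => sq_nonneg _) (Finset.mem_univ i))
  calc ρ ^ 2 < √(∑ i, x i ^ 2) ^ 2 := by gcongr; exact hx.trans_le hnorm
    _ = ∑ i, x i ^ 2 := Real.sq_sqrt (Finset.sum_nonneg fun i _ => sq_nonneg _)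

theorem ContinuousOn.continuous_comp_prodMk_left {X Y Z : Type*} [TopologicalSpace X]
    [TopologicalSpace Y] [TopologicalSpace Z] {f : X × Y → Z} {J : Set Y}
    (hf : ContinuousOn f (univ ×ˢ J)) {t : Y} (ht : t ∈ J) : Continuous fun x => f (x, t) :=
  hf.comp_continuous (continuous_id.prodMk continuous_const) fun _ => ⟨trivial, ht⟩

theorem DifferentiableAt.hasDerivAt_comp_prodMk_right {E F : Type*} [NormedAddCommGroup E]
    [NormedSpace ℝ E] [NormedAddCommGroup F] [NormedSpace ℝ F] {f : E × ℝ → F} {x : E} {t : ℝ}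
    (hf : DifferentiableAt ℝ f (x, t)) :
    HasDerivAt (fun τ => f (x, τ)) (fderiv ℝ f (x, t) (0, 1)) t :=
  hf.hasFDerivAt.comp_hasDerivAt t ((hasDerivAt_const t x).prodMk (hasDerivAt_id t))

theorem DifferentiableAt.hasDerivAt_comp_update {ι F : Type*} [Fintype ι] [DecidableEq ι]
    [NormedAddCommGroup F] [NormedSpace ℝ F] {f : (ι → ℝ) × ℝ → F} {x : ι → ℝ} {i : ι}
    {s t : ℝ} (hf : DifferentiableAt ℝ f (Function.update x i s, t)) :
    HasDerivAt (fun s' => f (Function.update x i s', t))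
      (fderiv ℝ f (Function.update x i s, t) (Pi.single i 1, 0)) s :=
  hf.hasFDerivAt.comp_hasDerivAt s ((hasDerivAt_update x i s).prodMk (hasDerivAt_const s t))

theorem eventuallyEq_zero_of_forall_notMem {E : Type*} [TopologicalSpace E] {U : E × ℝ → ℝ}
    {K : Set E} (hK : IsClosed K) {J : Set ℝ} (hJ : IsOpen J)
    (hsupp : ∀ x ∉ K, ∀ t ∈ J, U (x, t) = 0) : ∀ x ∉ K, ∀ t ∈ J, U =ᶠ[𝓝 (x, t)] 0 := by
  intro x hx t ht
  filter_upwards [(hK.isOpen_compl.prod hJ).mem_nhds ⟨hx, ht⟩] with z hz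
  exact hsupp z.1 hz.1 z.2 hz.2

theorem eq_of_hasDerivAt_zero_of_tendsto_nhdsLT {G : Type*} [NormedAddCommGroup G]
    [NormedSpace ℝ G] {f : ℝ → G} {a b : ℝ} {c : G} (hf : ∀ t ∈ Ioo a b, HasDerivAt f 0 t)
    (hlim : Tendsto f (𝓝[<] b) (𝓝 c)) {t : ℝ} (ht : t ∈ Ioo a b) : f t = c := by
  refine tendsto_nhds_unique (tendsto_const_nhds.congr' ?_) hlim
  filter_upwards [Ioo_mem_nhdsLT ht.2] with s hs
  exact isOpen_Ioo.is_const_of_deriv_eq_zero isPreconnected_Ioo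
    (fun τ hτ => (hf τ hτ).differentiableAt.differentiableWithinAt)
    (fun τ hτ => (hf τ hτ).deriv) ht ⟨ht.1.trans hs.1, hs.2⟩

theorem hasDerivAt_integral_of_compact_support {X : Type*} [TopologicalSpace X]
    [MeasurableSpace X] [OpensMeasurableSpace X] [T2Space X] {μ : Measure X}
    [IsFiniteMeasureOnCompacts μ] {F F' : X → ℝ → ℝ} {K : Set X} (hK : IsCompact K)
    {J : Set ℝ} (hJ : IsOpen J) (hF : ∀ τ ∈ J, Continuous fun x => F x τ)
    (hF' : ContinuousOn (Function.uncurry F') (univ ×ˢ J))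
    (hderiv : ∀ x, ∀ τ ∈ J, HasDerivAt (F x) (F' x τ) τ)
    (hsupp : ∀ x ∉ K, ∀ τ ∈ J, F x τ = 0 ∧ F' x τ = 0) {t : ℝ} (ht : t ∈ J) :
    HasDerivAt (fun τ => ∫ x, F x τ ∂μ) (∫ x, F' x t ∂μ) t := by
  obtain ⟨ε, hε, hεJ⟩ := Metric.nhds_basis_closedBall.mem_iff.1 (hJ.mem_nhds ht)
  have hballJ : ∀ τ ∈ Metric.ball t ε, τ ∈ J := fun τ hτ =>
    hεJ (Metric.ball_subset_closedBall hτ)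
  obtain ⟨C, hC⟩ := (hK.prod (isCompact_closedBall t ε)).exists_bound_of_continuousOn
    (hF'.mono (prod_mono (subset_univ K) hεJ))
  have hbound : ∀ x, ∀ τ ∈ Metric.ball t ε, ‖F' x τ‖ ≤ K.indicator (fun _ => C) x := by
    intro x τ hτ
    by_cases hx : x ∈ K
    · simpa [indicator_of_mem hx] using hC (x, τ) ⟨hx, Metric.ball_subset_closedBall hτ⟩
    · simp [indicator_of_notMem hx, (hsupp x hx τ (hballJ τ hτ)).2]
  have hint : Integrable (fun x => F x t) μ := by
    refine (integrableOn_iff_integrable_of_support_subset fun x hx => ?_).1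
      ((hF t ht).continuousOn.integrableOn_compact hK)
    by_contra hxK
    exact hx (hsupp x hxK t ht).1
  exact (hasDerivAt_integral_of_dominated_loc_of_deriv_le (Metric.ball_mem_nhds t hε)
    (eventually_of_mem (hJ.mem_nhds ht) fun τ hτ => (hF τ hτ).aestronglyMeasurable) hint
    (hF'.continuous_comp_prodMk_left ht).aestronglyMeasurable (Eventually.of_forall hbound)
    ((integrable_indicator_iff hK.measurableSet).2 (integrableOn_const hK.measure_lt_top.ne))
    (Eventually.of_forall fun x τ hτ => hderiv x τ (hballJ τ hτ))).2

theorem ContDiff.integrable_fderiv_apply {E : Type*} [NormedAddCommGroup E] [NormedSpace ℝ E]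
    [MeasurableSpace E] [OpensMeasurableSpace E] {μ : Measure E} [IsFiniteMeasureOnCompacts μ]
    {g : E → ℝ} (hg : ContDiff ℝ 1 g) (hgc : HasCompactSupport g) (v : E) :
    Integrable (fun x => fderiv ℝ g x v) μ :=
  ((hg.continuous_fderiv one_ne_zero).clm_apply continuous_const).integrable_of_hasCompactSupport
    ((hgc.fderiv (𝕜 := ℝ)).comp_left (g := fun L : E →L[ℝ] ℝ => L v) rfl)

section IntegrationByParts

variable {E : Type*} [NormedAddCommGroup E] [NormedSpace ℝ E] [FiniteDimensional ℝ E]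
  [MeasurableSpace E] [BorelSpace E] {μ : Measure E} [μ.IsAddHaarMeasure]

theorem integral_fderiv_apply_eq_zero {g : E → ℝ} (hg : ContDiff ℝ 1 g)
    (hgc : HasCompactSupport g) (v : E) : ∫ x, fderiv ℝ g x v ∂μ = 0 := by
  simpa using integral_mul_fderiv_eq_neg_fderiv_mul_of_integrable (μ := μ)
    (f := fun _ => (1 : ℝ)) (g := g) (v := v) (by simp)
    (by simpa using hg.integrable_fderiv_apply hgc v)
    (by simpa using hg.continuous.integrable_of_hasCompactSupport hgc)
    (fun x _ => differentiableAt_const _) (fun x _ => hg.differentiable one_ne_zero x)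

theorem integral_sum_fderiv_apply_eq_zero {ι : Type*} [Fintype ι] {w : ι → E → ℝ}
    (hw : ∀ i, ContDiff ℝ 1 (w i)) (hwc : ∀ i, HasCompactSupport (w i)) (v : ι → E) :
    ∫ x, ∑ i, fderiv ℝ (w i) x (v i) ∂μ = 0 := by
  rw [integral_finsetSum _ fun i _ => (hw i).integrable_fderiv_apply (hwc i) (v i)]
  exact Finset.sum_eq_zero fun i _ => integral_fderiv_apply_eq_zero (hw i) (hwc i) (v i)

end IntegrationByParts

theorem integral_rpow_abs_le_of_eLpNorm_le {α : Type*} [MeasurableSpace α] {μ : Measure α}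
    {f : α → ℝ} (hf : AEStronglyMeasurable f μ) {a b A : ℝ} (ha : 0 < a) (hab : a ≤ b)
    (hA : 0 ≤ A) {S : Set α} (hS : μ S ≠ ∞) (hsupp : ∀ x ∉ S, f x = 0)
    (hbd : eLpNorm f (ENNReal.ofReal b) μ ≤ ENNReal.ofReal A) :
    ∫ x, |f x| ^ a ∂μ ≤ A ^ a * (μ S).toReal ^ (1 - a / b) := by
  have hb : 0 < b := ha.trans_le hab
  have hrestrict : ∫ x, |f x| ^ a ∂μ = ∫ x, |f x| ^ a ∂μ.restrict S :=
    (setIntegral_eq_integral_of_forall_compl_eq_zero fun x hx => by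
      simp [hsupp x hx, Real.zero_rpow ha.ne']).symm
  have hlintegral : ∫ x, |f x| ^ a ∂μ.restrict S
      = (eLpNorm f (ENNReal.ofReal a) (μ.restrict S) ^ a).toReal := by
    rw [eLpNorm_eq_eLpNorm' (by simpa using ha) ENNReal.ofReal_ne_top, ENNReal.toReal_ofReal ha.le,
      ← lintegral_rpow_enorm_eq_rpow_eLpNorm' ha, integral_eq_lintegral_of_nonneg_ae
        (Eventually.of_forall fun x => by positivity)
        (by simpa only [Real.norm_eq_abs] using
          (hf.restrict.norm.aemeasurable.pow_const a).aestronglyMeasurable)]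
    congr 1
    refine lintegral_congr fun x => ?_
    rw [Real.enorm_eq_ofReal_abs, ENNReal.ofReal_rpow_of_nonneg (abs_nonneg _) ha.le]
  have hholder : eLpNorm f (ENNReal.ofReal a) (μ.restrict S)
      ≤ ENNReal.ofReal A * μ S ^ (1 / a - 1 / b) := by
    have h := eLpNorm_le_eLpNorm_mul_rpow_measure_univ (ENNReal.ofReal_le_ofReal hab)
      (hf.restrict (s := S))
    rw [ENNReal.toReal_ofReal ha.le, ENNReal.toReal_ofReal hb.le,
      Measure.restrict_apply_univ] at h
    exact h.trans (mul_le_mul_left ((eLpNorm_restrict_le _ _ _ _).trans hbd) _)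
  calc ∫ x, |f x| ^ a ∂μ = (eLpNorm f (ENNReal.ofReal a) (μ.restrict S) ^ a).toReal := by
        rw [hrestrict, hlintegral]
    _ ≤ ((ENNReal.ofReal A * μ S ^ (1 / a - 1 / b)) ^ a).toReal := by
        refine ENNReal.toReal_mono ?_ (ENNReal.rpow_le_rpow hholder ha.le)
        exact ENNReal.rpow_ne_top_of_nonneg ha.le (ENNReal.mul_ne_top ENNReal.ofReal_ne_top
          (ENNReal.rpow_ne_top_of_nonneg (sub_nonneg.2 (by gcongr)) hS))
    _ = A ^ a * (μ S).toReal ^ (1 - a / b) := by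
        rw [ENNReal.mul_rpow_of_nonneg _ _ ha.le, ← ENNReal.rpow_mul, ENNReal.toReal_mul,
          ← ENNReal.toReal_rpow, ← ENNReal.toReal_rpow, ENNReal.toReal_ofReal hA]
        congr 2
        field_simp

theorem tendsto_integral_rpow_abs_of_measure_tendsto_zero {ι α : Type*} [MeasurableSpace α]
    {μ : Measure α} {l : Filter ι} {f : ι → α → ℝ} {S : ι → Set α} {a b A : ℝ}
    (ha : 0 < a) (hab : a < b) (hA : 0 ≤ A) (hS : Tendsto (fun i => μ (S i)) l (𝓝 0))
    (hf : ∀ᶠ i in l, AEStronglyMeasurable (f i) μ ∧ (∀ x ∉ S i, f i x = 0) ∧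
      eLpNorm (f i) (ENNReal.ofReal b) μ ≤ ENNReal.ofReal A) :
    Tendsto (fun i => ∫ x, |f i x| ^ a ∂μ) l (𝓝 0) := by
  have hexp : 0 < 1 - a / b := by
    rw [sub_pos, div_lt_one (ha.trans hab)]
    exact hab
  have hbound : Tendsto (fun i => A ^ a * (μ (S i)).toReal ^ (1 - a / b)) l (𝓝 0) := by
    have h := ((ENNReal.tendsto_toReal ENNReal.zero_ne_top).comp hS).rpow_const
      (p := 1 - a / b) (Or.inr hexp.le)
    simpa [Real.zero_rpow hexp.ne'] using h.const_mul (A ^ a)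
  refine tendsto_of_tendsto_of_tendsto_of_le_of_le' tendsto_const_nhds hbound
    (Eventually.of_forall fun i => integral_nonneg fun x => by positivity) ?_
  filter_upwards [hf, hS.eventually (gt_mem_nhds ENNReal.zero_lt_top)]
    with i ⟨hmeas, hsupp, hbd⟩ hfin
  exact integral_rpow_abs_le_of_eLpNorm_le hmeas ha hab.le hA hfin.ne hsupp hbd

section Energy

variable {n : ℕ}

noncomputable def energyDensity (p : ℝ) (U : (Fin n → ℝ) × ℝ → ℝ) (z : (Fin n → ℝ) × ℝ) : ℝ :=
  (∑ i, fderiv ℝ U z (Pi.single i 1, 0) ^ 2) / 2 + fderiv ℝ U z (0, 1) ^ 2 / 2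
    + |U z| ^ (p + 1) / (p + 1)

noncomputable def energy (p : ℝ) (U : (Fin n → ℝ) × ℝ → ℝ) (t : ℝ) : ℝ :=
  ∫ x, energyDensity p U (x, t)

/-- `∑ᵢ ∂ᵢ(∂ₜU ∂ᵢU)`; for a solution it is also `∂ₜ` of the energy density. -/
noncomputable def divEnergyFlux (U : (Fin n → ℝ) × ℝ → ℝ) (z : (Fin n → ℝ) × ℝ) : ℝ :=
  ∑ i, (fderiv ℝ U z (Pi.single i 1, 0) * fderiv ℝ (fderiv ℝ U) z (Pi.single i 1, 0) (0, 1)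
    + fderiv ℝ U z (0, 1) * fderiv ℝ (fderiv ℝ U) z (Pi.single i 1, 0) (Pi.single i 1, 0))

theorem hasDerivAt_energyDensity {p : ℝ} (hp : 0 < p) {U : (Fin n → ℝ) × ℝ → ℝ}
    {x : Fin n → ℝ} {t : ℝ} (hU : ContDiffAt ℝ 2 U (x, t))
    (hwave : fderiv ℝ (fderiv ℝ U) (x, t) (0, 1) (0, 1)
      = ∑ i, fderiv ℝ (fderiv ℝ U) (x, t) (Pi.single i 1, 0) (Pi.single i 1, 0)
        - |U (x, t)| ^ (p - 1) * U (x, t)) :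
    HasDerivAt (fun τ => energyDensity p U (x, τ)) (divEnergyFlux U (x, t)) t := by
  have hDU : HasDerivAt (fun τ => fderiv ℝ U (x, τ)) (fderiv ℝ (fderiv ℝ U) (x, t) (0, 1)) t :=
    ((hU.fderiv_right (m := 1) (by norm_num)).differentiableAt one_ne_zero
      ).hasDerivAt_comp_prodMk_right
  have hD : ∀ v, HasDerivAt (fun τ => fderiv ℝ U (x, τ) v)
      (fderiv ℝ (fderiv ℝ U) (x, t) (0, 1) v) t := fun v => by
    simpa using hDU.clm_apply (hasDerivAt_const t v)
  have hpow := (hasDerivAt_abs_rpow (U (x, t)) (by linarith : 1 < p + 1)).comp t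
    (hU.differentiableAt two_ne_zero).hasDerivAt_comp_prodMk_right
  refine (((HasDerivAt.fun_sum (u := Finset.univ) fun i _ =>
    (hD (Pi.single i 1, 0)).fun_pow 2).div_const 2 |>.fun_add
      (((hD (0, 1)).fun_pow 2).div_const 2)).fun_add (hpow.div_const (p + 1))).congr_deriv ?_
  simp only [divEnergyFlux, Finset.sum_add_distrib, hU.isSymmSndFDerivAt (by simp) (0, 1), hwave,
    show p + 1 - 2 = p - 1 by ring, Nat.cast_ofNat, Nat.add_one_sub_one, pow_one]
  field_simp
  simp only [mul_assoc, ← Finset.mul_sum]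
  ring

theorem continuousOn_energyDensity {p : ℝ} (hp : 0 ≤ p + 1) {U : (Fin n → ℝ) × ℝ → ℝ}
    {s : Set ((Fin n → ℝ) × ℝ)} (hs : IsOpen s) (hU : ContDiffOn ℝ 1 U s) :
    ContinuousOn (energyDensity p U) s := by
  have hD := hU.continuousOn_fderiv_of_isOpen hs le_rfl
  unfold energyDensity
  exact ContinuousOn.add (by fun_prop)
    ((hU.continuousOn.abs.rpow_const fun _ _ => Or.inr hp).div_const _)

theorem continuousOn_divEnergyFlux {U : (Fin n → ℝ) × ℝ → ℝ}
    {s : Set ((Fin n → ℝ) × ℝ)} (hs : IsOpen s) (hU : ContDiffOn ℝ 2 U s) :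
    ContinuousOn (divEnergyFlux U) s := by
  have hD := hU.continuousOn_fderiv_of_isOpen hs one_le_two
  have hD2 := (hU.fderiv_of_isOpen hs (m := 1) (by norm_num)).continuousOn_fderiv_of_isOpen
    hs le_rfl
  unfold divEnergyFlux
  fun_prop

theorem energyDensity_eq_zero {p : ℝ} (hp : p + 1 ≠ 0) {U : (Fin n → ℝ) × ℝ → ℝ}
    {z : (Fin n → ℝ) × ℝ} (hU : U =ᶠ[𝓝 z] 0) : energyDensity p U z = 0 := by
  simp [energyDensity, hU.fderiv_eq, hU.eq_of_nhds, Real.zero_rpow hp]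

theorem divEnergyFlux_eq_zero {U : (Fin n → ℝ) × ℝ → ℝ} {z : (Fin n → ℝ) × ℝ}
    (hU : U =ᶠ[𝓝 z] 0) : divEnergyFlux U z = 0 := by
  simp [divEnergyFlux, hU.fderiv_eq, hU.fderiv.fderiv_eq]

theorem abs_rpow_div_le_energyDensity (p : ℝ) (U : (Fin n → ℝ) × ℝ → ℝ)
    (z : (Fin n → ℝ) × ℝ) : |U z| ^ (p + 1) / (p + 1) ≤ energyDensity p U z := by
  have := Finset.sum_nonneg fun i (_ : i ∈ Finset.univ) =>
    sq_nonneg (fderiv ℝ U z (Pi.single i 1, 0))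
  have := sq_nonneg (fderiv ℝ U z (0, 1))
  unfold energyDensity
  linarith

theorem integral_divEnergyFlux_eq_zero {U : (Fin n → ℝ) × ℝ → ℝ} {J : Set ℝ} (hJ : IsOpen J)
    (hU : ContDiffOn ℝ 2 U (univ ×ˢ J)) {K : Set (Fin n → ℝ)} (hK : IsCompact K)
    (hsupp : ∀ x ∉ K, ∀ t ∈ J, U (x, t) = 0) {t : ℝ} (ht : t ∈ J) :
    ∫ x, divEnergyFlux U (x, t) = 0 := by
  have hΩ : IsOpen (univ ×ˢ J : Set ((Fin n → ℝ) × ℝ)) := isOpen_univ.prod hJ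
  have hD : ContDiff ℝ 1 fun y => fderiv ℝ U (y, t) :=
    contDiffOn_univ.1 <| (hU.fderiv_of_isOpen hΩ (m := 1) (by norm_num)).comp
      (contDiff_id.prodMk contDiff_const).contDiffOn fun y _ => ⟨trivial, ht⟩
  set w : Fin n → (Fin n → ℝ) → ℝ :=
    fun i y => fderiv ℝ U (y, t) (0, 1) * fderiv ℝ U (y, t) (Pi.single i 1, 0)
  have hw : ∀ i, ContDiff ℝ 1 (w i) := fun i =>
    (hD.clm_apply contDiff_const).mul (hD.clm_apply contDiff_const)
  have hwc : ∀ i, HasCompactSupport (w i) := fun i => HasCompactSupport.intro hK fun y hy => by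
    simp [w, (eventuallyEq_zero_of_forall_notMem hK.isClosed hJ hsupp y hy t ht).fderiv_eq]
  have hdiv : ∀ x, divEnergyFlux U (x, t) = ∑ i, fderiv ℝ (w i) x (Pi.single i 1) := by
    intro x
    have hDd : DifferentiableAt ℝ (fderiv ℝ U) (x, t) :=
      ((hU.contDiffAt (hΩ.mem_nhds ⟨trivial, ht⟩)).fderiv_right (m := 1) (by norm_num)
        ).differentiableAt one_ne_zero
    have hDx : ∀ v, HasFDerivAt (fun y => fderiv ℝ U (y, t) v)
        ((ContinuousLinearMap.apply ℝ ℝ v).comp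
          ((fderiv ℝ (fderiv ℝ U) (x, t)).comp (ContinuousLinearMap.inl ℝ _ ℝ))) x :=
      fun v => (ContinuousLinearMap.apply ℝ ℝ v).hasFDerivAt.comp x
        (hDd.hasFDerivAt.comp x (hasFDerivAt_prodMk_left x t))
    refine Finset.sum_congr rfl fun i _ => ?_
    rw [((hDx (0, 1)).fun_mul (hDx (Pi.single i 1, 0))).fderiv]
    simp only [add_apply, smul_apply, ContinuousLinearMap.comp_apply,
      ContinuousLinearMap.inl_apply, ContinuousLinearMap.apply_apply, smul_eq_mul]
    ring
  simp_rw [hdiv]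
  exact integral_sum_fderiv_apply_eq_zero hw hwc _

theorem hasDerivAt_energy {p : ℝ} (hp : 0 < p) {U : (Fin n → ℝ) × ℝ → ℝ} {J : Set ℝ}
    (hJ : IsOpen J) (hU : ContDiffOn ℝ 2 U (univ ×ˢ J)) {K : Set (Fin n → ℝ)} (hK : IsCompact K)
    (hsupp : ∀ x ∉ K, ∀ t ∈ J, U (x, t) = 0)
    (hwave : ∀ x, ∀ t ∈ J, fderiv ℝ (fderiv ℝ U) (x, t) (0, 1) (0, 1)
      = ∑ i, fderiv ℝ (fderiv ℝ U) (x, t) (Pi.single i 1, 0) (Pi.single i 1, 0)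
        - |U (x, t)| ^ (p - 1) * U (x, t)) {t : ℝ} (ht : t ∈ J) :
    HasDerivAt (energy p U) 0 t := by
  have hΩ : IsOpen (univ ×ˢ J : Set ((Fin n → ℝ) × ℝ)) := isOpen_univ.prod hJ
  have hzero := eventuallyEq_zero_of_forall_notMem hK.isClosed hJ hsupp
  have h := hasDerivAt_integral_of_compact_support (μ := volume)
    (F := fun x τ => energyDensity p U (x, τ)) (F' := fun x τ => divEnergyFlux U (x, τ)) hK hJ
    (fun τ hτ => ((continuousOn_energyDensity (by linarith) hΩ (hU.of_le one_le_two)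
      ).continuous_comp_prodMk_left hτ))
    (continuousOn_divEnergyFlux hΩ hU)
    (fun x τ hτ => hasDerivAt_energyDensity hp (hU.contDiffAt (hΩ.mem_nhds ⟨trivial, hτ⟩))
      (hwave x τ hτ))
    (fun x hx τ hτ => ⟨energyDensity_eq_zero (by linarith) (hzero x hx τ hτ),
      divEnergyFlux_eq_zero (hzero x hx τ hτ)⟩) ht
  rwa [integral_divEnergyFlux_eq_zero hJ hU hK hsupp ht] at h

theorem eq_zero_of_energy_eq_zero {p : ℝ} (hp : 0 < p + 1) {U : (Fin n → ℝ) × ℝ → ℝ}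
    {J : Set ℝ} (hJ : IsOpen J) (hU : ContDiffOn ℝ 1 U (univ ×ˢ J)) {K : Set (Fin n → ℝ)}
    (hK : IsCompact K) (hsupp : ∀ x ∉ K, ∀ t ∈ J, U (x, t) = 0) {t : ℝ} (ht : t ∈ J)
    (hE : energy p U t = 0) (x : Fin n → ℝ) : U (x, t) = 0 := by
  have hnonneg : ∀ z, 0 ≤ energyDensity p U z := fun z =>
    (div_nonneg (Real.rpow_nonneg (abs_nonneg _) _) hp.le).trans
      (abs_rpow_div_le_energyDensity p U z)
  have hcont : Continuous fun x => energyDensity p U (x, t) :=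
    (continuousOn_energyDensity hp.le (isOpen_univ.prod hJ) hU).continuous_comp_prodMk_left ht
  have hzero := eventuallyEq_zero_of_forall_notMem hK.isClosed hJ hsupp
  have hint : Integrable fun x => energyDensity p U (x, t) :=
    hcont.integrable_of_hasCompactSupport <| HasCompactSupport.intro hK fun x hx =>
      energyDensity_eq_zero hp.ne' (hzero x hx t ht)
  have hdensity : (fun x => energyDensity p U (x, t)) = 0 :=
    (Continuous.ae_eq_iff_eq volume hcont continuous_const).1
      ((integral_eq_zero_iff_of_nonneg (fun x => hnonneg _) hint).1 hE)
  have h := abs_rpow_div_le_energyDensity p U (x, t)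
  rw [congrFun hdensity x, Pi.zero_apply, div_le_iff₀ hp, zero_mul] at h
  exact abs_eq_zero.1 <| (Real.rpow_eq_zero (abs_nonneg _) hp.ne').1 <|
    le_antisymm h (Real.rpow_nonneg (abs_nonneg _) _)

theorem energy_eq_add {p : ℝ} (hp : 0 < p + 1) {U : (Fin n → ℝ) × ℝ → ℝ} {J : Set ℝ}
    (hJ : IsOpen J) (hU : ContDiffOn ℝ 1 U (univ ×ˢ J)) {K : Set (Fin n → ℝ)} (hK : IsCompact K)
    (hsupp : ∀ x ∉ K, ∀ t ∈ J, U (x, t) = 0) {t : ℝ} (ht : t ∈ J) :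
    energy p U t = (∫ x, |√(∑ i, fderiv ℝ U (x, t) (Pi.single i 1, 0) ^ 2)| ^ (2 : ℝ)) / 2
      + (∫ x, |fderiv ℝ U (x, t) (0, 1)| ^ (2 : ℝ)) / 2
      + (∫ x, |U (x, t)| ^ (p + 1)) / (p + 1) := by
  have hzero := eventuallyEq_zero_of_forall_notMem hK.isClosed hJ hsupp
  have hD := (hU.continuousOn_fderiv_of_isOpen (isOpen_univ.prod hJ) le_rfl
    ).continuous_comp_prodMk_left ht
  have hint : ∀ f : (Fin n → ℝ) → ℝ, Continuous f → (∀ x ∉ K, f x = 0) → Integrable f :=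
    fun f hf h => hf.integrable_of_hasCompactSupport (HasCompactSupport.intro hK h)
  have h1 : Integrable fun x => (∑ i, fderiv ℝ U (x, t) (Pi.single i 1, 0) ^ 2) / 2 :=
    hint _ (by fun_prop) fun x hx => by simp [(hzero x hx t ht).fderiv_eq]
  have h2 : Integrable fun x => fderiv ℝ U (x, t) (0, 1) ^ 2 / 2 :=
    hint _ (by fun_prop) fun x hx => by simp [(hzero x hx t ht).fderiv_eq]
  have h3 : Integrable fun x => |U (x, t)| ^ (p + 1) :=
    hint _ ((hU.continuousOn.continuous_comp_prodMk_left ht).abs.rpow_const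
      fun _ => Or.inr hp.le) fun x hx => by
        simp [(hzero x hx t ht).eq_of_nhds, Real.zero_rpow hp.ne']
  simp only [energy, energyDensity]
  rw [integral_add (h1.fun_add h2) (h3.div_const _), integral_add h1 h2, integral_div,
    integral_div, integral_div]
  simp only [Real.rpow_two, sq_abs, Real.sq_sqrt (Finset.sum_nonneg fun i _ => sq_nonneg _)]

theorem eventuallyEq_zero_of_forall_notMem_closedBall {U : (Fin n → ℝ) × ℝ → ℝ}
    (hsupp : ∀ t ∈ Ioo (0 : ℝ) 1, ∀ x ∉ Metric.closedBall 0 (1 - t), U (x, t) = 0) :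
    ∀ t ∈ Ioo (0 : ℝ) 1, ∀ x ∉ Metric.closedBall 0 (1 - t), U =ᶠ[𝓝 (x, t)] 0 := by
  have hW : IsOpen {z : (Fin n → ℝ) × ℝ | 1 - z.2 < ‖z.1‖ ∧ z.2 ∈ Ioo 0 1} :=
    (isOpen_lt (f := fun z : (Fin n → ℝ) × ℝ => 1 - z.2) (by fun_prop) (by fun_prop)).inter
      (isOpen_Ioo.preimage continuous_snd)
  intro t ht x hx
  filter_upwards [hW.mem_nhds ⟨by simpa using hx, ht⟩] with z hz
  exact hsupp z.2 hz.2 z.1 (by simpa using hz.1)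

theorem tendsto_volume_closedBall_one_sub [NeZero n] :
    Tendsto (fun t => volume (Metric.closedBall (0 : Fin n → ℝ) (1 - t))) (𝓝[<] 1) (𝓝 0) := by
  have h : Tendsto (fun t : ℝ => ENNReal.ofReal ((2 * (1 - t)) ^ n)) (𝓝 1) (𝓝 0) := by
    simpa [NeZero.ne n] using ENNReal.tendsto_ofReal
      ((((continuous_const (y := (1 : ℝ)).sub continuous_id).const_mul 2).pow n).tendsto 1)
  refine (h.mono_left nhdsWithin_le_nhds).congr' ?_
  filter_upwards [self_mem_nhdsWithin] with t ht
  rw [Real.volume_pi_closedBall _ (by linarith [mem_Iio.1 ht]), Fintype.card_fin]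

theorem tendsto_energy_nhdsLT_one [NeZero n] {p q r A : ℝ} (hp : 0 < p + 1) (hq : 2 < q)
    (hr : p + 1 < r) (hA : 0 ≤ A) {U : (Fin n → ℝ) × ℝ → ℝ}
    (hU : ContDiffOn ℝ 1 U (univ ×ˢ Ioo 0 1))
    (hsupp : ∀ t ∈ Ioo (0 : ℝ) 1, ∀ x ∉ Metric.closedBall 0 (1 - t), U (x, t) = 0)
    (hbd : ∀ t ∈ Ioo (0 : ℝ) 1,
      eLpNorm (fun x => √(∑ i, fderiv ℝ U (x, t) (Pi.single i 1, 0) ^ 2)) (ENNReal.ofReal q) volume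
        + eLpNorm (fun x => fderiv ℝ U (x, t) (0, 1)) (ENNReal.ofReal q) volume
        + eLpNorm (fun x => U (x, t)) (ENNReal.ofReal r) volume ≤ ENNReal.ofReal A) :
    Tendsto (energy p U) (𝓝[<] 1) (𝓝 0) := by
  have hΩ : IsOpen (univ ×ˢ Ioo 0 1 : Set ((Fin n → ℝ) × ℝ)) := isOpen_univ.prod isOpen_Ioo
  have hsupp' : ∀ x ∉ Metric.closedBall 0 1, ∀ t ∈ Ioo (0 : ℝ) 1, U (x, t) = 0 :=
    fun x hx t ht => hsupp t ht x fun h => hx (Metric.closedBall_subset_closedBall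
      (by linarith [ht.1]) h)
  have hzero := eventuallyEq_zero_of_forall_notMem_closedBall hsupp
  have hD : ∀ t ∈ Ioo (0 : ℝ) 1, Continuous fun x => fderiv ℝ U (x, t) := fun t ht =>
    (hU.continuousOn_fderiv_of_isOpen hΩ le_rfl).continuous_comp_prodMk_left ht
  have hI : ∀ᶠ t in 𝓝[<] (1 : ℝ), t ∈ Ioo (0 : ℝ) 1 := Ioo_mem_nhdsLT zero_lt_one
  have hgrad := tendsto_integral_rpow_abs_of_measure_tendsto_zero
    (f := fun t x => √(∑ i, fderiv ℝ U (x, t) (Pi.single i 1, 0) ^ 2)) two_pos hq hA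
    tendsto_volume_closedBall_one_sub <| by
      filter_upwards [hI] with t ht
      exact ⟨(by have := hD t ht; fun_prop : Continuous _).aestronglyMeasurable,
        fun x hx => by simp [(hzero t ht x hx).fderiv_eq],
        (le_self_add.trans le_self_add).trans (hbd t ht)⟩
  have hdt := tendsto_integral_rpow_abs_of_measure_tendsto_zero
    (f := fun t x => fderiv ℝ U (x, t) (0, 1)) two_pos hq hA
    tendsto_volume_closedBall_one_sub <| by
      filter_upwards [hI] with t ht
      exact ⟨(by have := hD t ht; fun_prop : Continuous _).aestronglyMeasurable,
        fun x hx => by simp [(hzero t ht x hx).fderiv_eq],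
        (le_add_self.trans le_self_add).trans (hbd t ht)⟩
  have hpot := tendsto_integral_rpow_abs_of_measure_tendsto_zero
    (f := fun t x => U (x, t)) hp hr hA tendsto_volume_closedBall_one_sub <| by
      filter_upwards [hI] with t ht
      exact ⟨(hU.continuousOn.continuous_comp_prodMk_left ht).aestronglyMeasurable,
        fun x hx => (hzero t ht x hx).eq_of_nhds, le_add_self.trans (hbd t ht)⟩
  have h := ((hgrad.div_const 2).add (hdt.div_const 2)).add (hpot.div_const (p + 1))
  simp only [zero_div, add_zero] at h
  refine h.congr' ?_
  filter_upwards [hI] with t ht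
  exact (energy_eq_add hp isOpen_Ioo hU (isCompact_closedBall 0 1) hsupp' ht).symm

end Energy

section FinThree

variable {u : (Fin 3 → ℝ) → ℝ → ℝ} {x : Fin 3 → ℝ} {t : ℝ}

theorem pder_eq_fderiv (i : Fin 3) (hu : DifferentiableAt ℝ (Function.uncurry u) (x, t)) :
    pder (fun y => u y t) i x = fderiv ℝ (Function.uncurry u) (x, t) (Pi.single i 1, 0) := by
  have h := (show DifferentiableAt ℝ (Function.uncurry u) (Function.update x i (x i), t) by
    rwa [Function.update_eq_self]).hasDerivAt_comp_update
  rw [Function.update_eq_self] at h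
  exact h.deriv

theorem lap_eq_sum_fderiv_fderiv (hu : ∀ y, DifferentiableAt ℝ (Function.uncurry u) (y, t))
    (hDu : DifferentiableAt ℝ (fderiv ℝ (Function.uncurry u)) (x, t)) :
    lap (fun y => u y t) x
      = ∑ i, fderiv ℝ (fderiv ℝ (Function.uncurry u)) (x, t) (Pi.single i 1, 0)
        (Pi.single i 1, 0) := by
  refine Finset.sum_congr rfl fun i _ => ?_
  have hinner : (fun s => deriv (fun s' => u (Function.update x i s') t) s)
      = fun s => fderiv ℝ (Function.uncurry u) (Function.update x i s, t) (Pi.single i 1, 0) :=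
    funext fun s => (hu _).hasDerivAt_comp_update.deriv
  have hDu' : DifferentiableAt ℝ (fderiv ℝ (Function.uncurry u))
      (Function.update x i (x i), t) := by
    rwa [Function.update_eq_self]
  have h := hDu'.hasDerivAt_comp_update.clm_apply (hasDerivAt_const (x i) (Pi.single i 1, 0))
  simp only [Function.update_eq_self, map_zero, add_zero] at h
  rw [hinner]
  exact h.deriv

theorem deriv_deriv_eq_fderiv_fderiv
    (hu : ∀ᶠ τ in 𝓝 t, DifferentiableAt ℝ (Function.uncurry u) (x, τ))
    (hDu : DifferentiableAt ℝ (fderiv ℝ (Function.uncurry u)) (x, t)) :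
    deriv (fun τ => deriv (fun σ => u x σ) τ) t
      = fderiv ℝ (fderiv ℝ (Function.uncurry u)) (x, t) (0, 1) (0, 1) := by
  have hinner : (fun τ => deriv (fun σ => u x σ) τ)
      =ᶠ[𝓝 t] fun τ => fderiv ℝ (Function.uncurry u) (x, τ) (0, 1) :=
    hu.mono fun τ hτ => hτ.hasDerivAt_comp_prodMk_right.deriv
  rw [hinner.deriv_eq]
  simpa using (hDu.hasDerivAt_comp_prodMk_right.clm_apply (hasDerivAt_const t (0, 1))).deriv

theorem fderiv_fderiv_eq_of_deriv_deriv_eq_lap {p : ℝ} {J : Set ℝ} (hJ : IsOpen J)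
    (hu : ContDiffOn ℝ 2 (Function.uncurry u) (univ ×ˢ J))
    (hpde : ∀ x, ∀ t ∈ J, deriv (fun τ => deriv (fun σ => u x σ) τ) t
      = lap (fun y => u y t) x - |u x t| ^ (p - 1) * u x t) :
    ∀ x, ∀ t ∈ J, fderiv ℝ (fderiv ℝ (Function.uncurry u)) (x, t) (0, 1) (0, 1)
      = ∑ i, fderiv ℝ (fderiv ℝ (Function.uncurry u)) (x, t) (Pi.single i 1, 0) (Pi.single i 1, 0)
        - |Function.uncurry u (x, t)| ^ (p - 1) * Function.uncurry u (x, t) := by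
  have hΩ : IsOpen (univ ×ˢ J : Set ((Fin 3 → ℝ) × ℝ)) := isOpen_univ.prod hJ
  have hud : ∀ y, ∀ τ ∈ J, DifferentiableAt ℝ (Function.uncurry u) (y, τ) := fun y τ hτ =>
    (hu.differentiableOn two_ne_zero).differentiableAt (hΩ.mem_nhds ⟨trivial, hτ⟩)
  intro x t ht
  have hDud : DifferentiableAt ℝ (fderiv ℝ (Function.uncurry u)) (x, t) :=
    ((hu.contDiffAt (hΩ.mem_nhds ⟨trivial, ht⟩)).fderiv_right (m := 1) (by norm_num)
      ).differentiableAt one_ne_zero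
  rw [← deriv_deriv_eq_fderiv_fderiv (eventually_of_mem (hJ.mem_nhds ht) fun τ hτ => hud x τ hτ)
    hDud, ← lap_eq_sum_fderiv_fderiv (fun y => hud y t ht) hDud]
  exact hpde x t ht

end FinThree

/-- The self-similar rigidity argument of Proposition 5.4: a classical solution of
`∂_t² u = Δu − |u|^{p−1}u` on `ℝ³ × (0,1)`, `p ≥ 5`, with `u(·,t)` and `∂_t u(·,t)`
supported in `{|x| ≤ 1−t}` for `t ∈ [0,1)`, and uniformly bounded in
`L^q × L^q × L^r` (for `∇u`, `∂_t u`, `u`) with `q > 2`, `r > p+1`, vanishes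
identically. -/
theorem stmt_19 (p : ℝ) (hp : 5 ≤ p)
    (u : (Fin 3 → ℝ) → ℝ → ℝ)
    (hu : ContDiffOn ℝ 2 (fun z : (Fin 3 → ℝ) × ℝ => u z.1 z.2)
      (Set.univ ×ˢ Set.Ico (0 : ℝ) 1))
    (hpde : ∀ x : Fin 3 → ℝ, ∀ t ∈ Set.Ioo (0 : ℝ) 1,
      deriv (fun τ => deriv (fun σ => u x σ) τ) t
        = lap (fun y => u y t) x - |u x t| ^ (p - 1) * u x t)
    (hsupp : ∀ t ∈ Set.Ico (0 : ℝ) 1, ∀ x : Fin 3 → ℝ, (1 - t) ^ 2 < ∑ i, x i ^ 2 →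
      u x t = 0 ∧ deriv (fun σ => u x σ) t = 0)
    (q r A : ℝ) (hq : 2 < q) (hr : p + 1 < r) (hA : 0 < A)
    (hbd : ∀ t ∈ Set.Ico (0 : ℝ) 1,
      eLpNorm (fun x : Fin 3 → ℝ =>
          Real.sqrt (∑ i, pder (fun y => u y t) i x ^ 2)) (ENNReal.ofReal q) volume
        + eLpNorm (fun x : Fin 3 → ℝ => deriv (fun σ => u x σ) t) (ENNReal.ofReal q) volume
        + eLpNorm (fun x : Fin 3 → ℝ => u x t) (ENNReal.ofReal r) volume
        ≤ ENNReal.ofReal A) :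
    ∀ x : Fin 3 → ℝ, ∀ t ∈ Set.Ico (0 : ℝ) 1, u x t = 0 := by
  set U := Function.uncurry u
  have hU : ContDiffOn ℝ 2 U (univ ×ˢ Ioo 0 1) := hu.mono (prod_mono subset_rfl Ioo_subset_Ico_self)
  have hUd : ∀ x, ∀ t ∈ Ioo (0 : ℝ) 1, DifferentiableAt ℝ U (x, t) := fun x t ht =>
    (hU.differentiableOn two_ne_zero).differentiableAt
      ((isOpen_univ.prod isOpen_Ioo).mem_nhds ⟨trivial, ht⟩)
  have hcone : ∀ t ∈ Ico (0 : ℝ) 1, ∀ x ∉ Metric.closedBall 0 (1 - t), U (x, t) = 0 :=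
    fun t ht x hx => (hsupp t ht x (sq_lt_sum_sq_of_notMem_closedBall (by linarith [ht.2]) hx)).1
  have hball : ∀ x ∉ Metric.closedBall 0 1, ∀ t ∈ Ioo (0 : ℝ) 1, U (x, t) = 0 :=
    fun x hx t ht => hcone t (Ioo_subset_Ico_self ht) x fun h => hx
      (Metric.closedBall_subset_closedBall (by linarith [ht.1]) h)
  have hE' : ∀ t ∈ Ioo (0 : ℝ) 1, HasDerivAt (energy p U) 0 t := fun t ht =>
    hasDerivAt_energy (by linarith) isOpen_Ioo hU (isCompact_closedBall 0 1) hball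
      (fderiv_fderiv_eq_of_deriv_deriv_eq_lap isOpen_Ioo hU hpde) ht
  have hlim : Tendsto (energy p U) (𝓝[<] 1) (𝓝 0) := by
    refine tendsto_energy_nhdsLT_one (by linarith) hq hr hA.le (hU.of_le one_le_two)
      (fun t ht => hcone t (Ioo_subset_Ico_self ht)) fun t ht => ?_
    have hdt : (fun x => deriv (fun σ => u x σ) t) = fun x => fderiv ℝ U (x, t) (0, 1) :=
      funext fun x => (hUd x t ht).hasDerivAt_comp_prodMk_right.deriv
    have h := hbd t (Ioo_subset_Ico_self ht)
    simp only [pder_eq_fderiv _ (hUd _ t ht), hdt] at h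
    exact h
  intro x t ht
  have hcont : ContinuousOn (fun σ => u x σ) (Ico 0 1) :=
    hu.continuousOn.comp (by fun_prop : Continuous fun σ : ℝ => (x, σ)).continuousOn
      fun σ hσ => ⟨trivial, hσ⟩
  refine EqOn.of_subset_closure (fun σ hσ => ?_) hcont continuousOn_const Ioo_subset_Ico_self
    (by rw [closure_Ioo zero_ne_one]; exact Ico_subset_Icc_self) ht
  exact eq_zero_of_energy_eq_zero (by linarith) isOpen_Ioo (hU.of_le one_le_two)
    (isCompact_closedBall 0 1) hball hσ (eq_of_hasDerivAt_zero_of_tendsto_nhdsLT hE' hlim hσ) x
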